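/- arXiv:2510.25580 — 3 statements merged into one kernel-verified Lean document; each statement's English description precedes it below -/
import Mathlib

section
/- Let W be a group acting ℤ-linearly on a free ℤ-module M of rank 3, with elements s₁, s₂ ∈ W acting as follows (with χ = 2) on the basis q₂ = q([T_{S₂}]), q₄, q₅ of M: s₂(q₂) = −q₂, s₂(q₄) = 3q₂ + q₄ + q₅, s₂(q₅) = −q₅, and s₁(q₂) = q₂ + q₄, s₁(q₄) = −q₄, s₁(q₅) = q₅. Then the ℤ-submodule spanned by q₅ admits no W-invariant ℤ-module complement in M. -/
/-- The action of the simple reflection `s₁` of `W(G₂)` on the free ℤ-module with basis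
`q₂, q₄, q₅` (the case `χ = 2`): `s₁·q₂ = q₂ + q₄`, `s₁·q₄ = -q₄`, `s₁·q₅ = q₅`.
Columns are the images of the basis vectors. -/
def s1Mat : Matrix (Fin 3) (Fin 3) ℤ := !![1, 0, 0; 1, -1, 0; 0, 0, 1]

/-- The action of `s₂` (the case `χ = 2`): `s₂·q₂ = -q₂`, `s₂·q₄ = 3q₂ + q₄ + q₅`,
`s₂·q₅ = -q₅`. -/
def s2Mat : Matrix (Fin 3) (Fin 3) ℤ := !![-1, 3, 0; 0, 1, 0; 0, 1, -1]

/-- With the `W(G₂)`-action on `M = ℤq₂ ⊕ ℤq₄ ⊕ ℤq₅` given by `s1Mat`, `s2Mat`, the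
ℤ-submodule spanned by `q₅` admits no `W`-invariant ℤ-module complement in `M`. -/
theorem g2_no_invariant_complement :
    ¬ ∃ N : Submodule ℤ (Fin 3 → ℤ),
        IsCompl (Submodule.span ℤ {![0, 0, 1]}) N ∧
        (∀ x ∈ N, s1Mat.mulVec x ∈ N ∧ s2Mat.mulVec x ∈ N) := by
  rintro ⟨N, ⟨hdis, hcod⟩, hinv⟩
  -- any vector (0,0,k) in N must be zero
  have hzero : ∀ k : ℤ, (![0, 0, k] : Fin 3 → ℤ) ∈ N → k = 0 := by
    intro k hk
    have h1 : (![0, 0, k] : Fin 3 → ℤ) ∈ Submodule.span ℤ {![0, 0, 1]} := by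
      refine Submodule.mem_span_singleton.mpr ⟨k, ?_⟩
      funext i; fin_cases i <;> simp
    have h0 : (![0, 0, k] : Fin 3 → ℤ) = 0 := by
      simpa using hdis.le_bot ⟨h1, hk⟩
    simpa using congrFun h0 2
  have htop : Submodule.span ℤ {![0, 0, 1]} ⊔ N = ⊤ := codisjoint_iff.mp hcod
  -- produce (1,0,n) ∈ N
  obtain ⟨a, ha, b, hb, hab⟩ := Submodule.mem_sup.mp
    (htop ▸ Submodule.mem_top : (![1, 0, 0] : Fin 3 → ℤ) ∈ _)
  obtain ⟨c, hc⟩ := Submodule.mem_span_singleton.mp ha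
  have hbn : (![1, 0, -c] : Fin 3 → ℤ) ∈ N := by
    have : b = ![1, 0, -c] := by
      have := hab
      rw [← hc] at this
      funext i
      have := congrFun this i
      fin_cases i <;> simp at this ⊢ <;> omega
    rwa [← this]
  set n : ℤ := -c with hn
  obtain ⟨a', ha', b', hb', hab'⟩ := Submodule.mem_sup.mp
    (htop ▸ Submodule.mem_top : (![0, 1, 0] : Fin 3 → ℤ) ∈ _)
  obtain ⟨c', hc'⟩ := Submodule.mem_span_singleton.mp ha'
  have hbm : (![0, 1, -c'] : Fin 3 → ℤ) ∈ N := by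
    have : b' = ![0, 1, -c'] := by
      have := hab'
      rw [← hc'] at this
      funext i
      have := congrFun this i
      fin_cases i <;> simp at this ⊢ <;> omega
    rwa [← this]
  set m : ℤ := -c' with hm
  -- s₂ invariance: s₂ (0,1,m) = (3,1,1-m)
  have hs2 : s2Mat.mulVec ![0, 1, m] = ![3, 1, 1 - m] := by
    funext i; fin_cases i <;>
      simp [s2Mat, Matrix.mulVec, dotProduct, Fin.sum_univ_three] <;> ring
  have h2 : (![3, 1, 1 - m] : Fin 3 → ℤ) ∈ N := hs2 ▸ (hinv _ hbm).2
  have hcomb : (![0, 0, 1 - 2 * m - 3 * n] : Fin 3 → ℤ) ∈ N := by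
    have : (![0, 0, 1 - 2 * m - 3 * n] : Fin 3 → ℤ)
        = ![3, 1, 1 - m] - (3 : ℤ) • ![1, 0, n] - ![0, 1, m] := by
      funext i; fin_cases i <;> simp <;> ring
    rw [this]
    exact Submodule.sub_mem N (Submodule.sub_mem N h2 (Submodule.smul_mem N 3 hbn)) hbm
  have heq1 : 1 - 2 * m - 3 * n = 0 := hzero _ hcomb
  -- s₁ invariance: s₁ (0,1,m) = (0,-1,m)
  have hs1 : s1Mat.mulVec ![0, 1, m] = ![0, -1, m] := by
    funext i; fin_cases i <;>
      simp [s1Mat, Matrix.mulVec, dotProduct, Fin.sum_univ_three]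
  have h1 : (![0, -1, m] : Fin 3 → ℤ) ∈ N := hs1 ▸ (hinv _ hbm).1
  have hcomb2 : (![0, 0, 2 * m] : Fin 3 → ℤ) ∈ N := by
    have : (![0, 0, 2 * m] : Fin 3 → ℤ) = ![0, -1, m] + ![0, 1, m] := by
      funext i; fin_cases i <;> simp <;> ring
    rw [this]
    exact Submodule.add_mem N h1 hbm
  have heq2 : 2 * m = 0 := hzero _ hcomb2
  omega
end

section
/- Let V be a free ℤ-module with basis T₀,…,T₉ and define ℤ-linear endomorphisms σ₁, σ₂ of V by the table: σ₁: T₀↦T₀+T₄, T₁↦−T₁, T₂↦T₂+T₄, T₃↦3T₁+T₃+T₆, T₄↦−T₄, T₅↦2T₄+T₅+T₆+T₈, T₆↦−T₆, T₇↦T₆+T₇+T₈+2T₉, T₈↦−T₈, T₉↦−T₉; σ₂: T₀↦T₀+T₃, T₁↦T₁+T₃, T₂↦−T₂, T₃↦−T₃, T₄↦T₂+T₄+T₅, T₅↦−T₅, T₆↦T₆+T₇, T₇↦−T₇, T₈↦T₈+2T₉, T₉↦−T₉. Then σ₁² = id, σ₂² = id, and (σ₁σ₂)⁶ = id, so that σ₁,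 σ₂ generate an action of the Weyl group of type G₂ (the dihedral group of order 12) on V. -/
/-- The Hotta–Rossmann action of the simple reflection `s₁` of `W(G₂)` on the free
ℤ-module with basis the conormal bundle classes `T₀, …, T₉`:
`σ₁: T₀↦T₀+T₄, T₁↦-T₁, T₂↦T₂+T₄, T₃↦3T₁+T₃+T₆, T₄↦-T₄, T₅↦2T₄+T₅+T₆+T₈, T₆↦-T₆,
T₇↦T₆+T₇+T₈+2T₉, T₈↦-T₈, T₉↦-T₉` (columns are images of basis vectors). -/
def sigma1 : Matrix (Fin 10) (Fin 10) ℤ :=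
  !![1, 0, 0, 0, 0, 0, 0, 0, 0, 0;
     0, -1, 0, 3, 0, 0, 0, 0, 0, 0;
     0, 0, 1, 0, 0, 0, 0, 0, 0, 0;
     0, 0, 0, 1, 0, 0, 0, 0, 0, 0;
     1, 0, 1, 0, -1, 2, 0, 0, 0, 0;
     0, 0, 0, 0, 0, 1, 0, 0, 0, 0;
     0, 0, 0, 1, 0, 1, -1, 1, 0, 0;
     0, 0, 0, 0, 0, 0, 0, 1, 0, 0;
     0, 0, 0, 0, 0, 1, 0, 1, -1, 0;
     0, 0, 0, 0, 0, 0, 0, 2, 0, -1]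

/-- The action of `s₂`:
`σ₂: T₀↦T₀+T₃, T₁↦T₁+T₃, T₂↦-T₂, T₃↦-T₃, T₄↦T₂+T₄+T₅, T₅↦-T₅, T₆↦T₆+T₇, T₇↦-T₇,
T₈↦T₈+2T₉, T₉↦-T₉`. -/
def sigma2 : Matrix (Fin 10) (Fin 10) ℤ :=
  !![1, 0, 0, 0, 0, 0, 0, 0, 0, 0;
     0, 1, 0, 0, 0, 0, 0, 0, 0, 0;
     0, 0, -1, 0, 1, 0, 0, 0, 0, 0;
     1, 1, 0, -1, 0, 0, 0, 0, 0, 0;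
     0, 0, 0, 0, 1, 0, 0, 0, 0, 0;
     0, 0, 0, 0, 1, -1, 0, 0, 0, 0;
     0, 0, 0, 0, 0, 0, 1, 0, 0, 0;
     0, 0, 0, 0, 0, 0, 1, -1, 0, 0;
     0, 0, 0, 0, 0, 0, 0, 0, 1, 0;
     0, 0, 0, 0, 0, 0, 0, 0, 2, -1]

/-- `σ₁² = 1`, `σ₂² = 1`, `(σ₁σ₂)⁶ = 1`: the operators `σ₁, σ₂` generate an action of
the Weyl group of type G₂ (the dihedral group of order 12) on `V = ⊕ᵢ ℤTᵢ`. -/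
theorem hotta_rossmann_action_is_weyl :
    sigma1 * sigma1 = 1 ∧ sigma2 * sigma2 = 1 ∧ (sigma1 * sigma2) ^ 6 = 1 := by
  refine ⟨by decide, by decide, ?_⟩
  rw [pow_succ, pow_succ, pow_succ, pow_succ, pow_succ, pow_one]
  decide
end

section
/- With the W(G₂)-action σ on V = ⊕ᵢ ℤTᵢ defined by the table in the previous context (σ₁, σ₂ as specified on T₀,…,T₉), the ℤ-linear map CC: ℤ¹⁰ → V determined by CC(P₀)=T₀, CC(P₁)=T₁, CC(P₂)=T₂, CC(P₃)=T₃, CC(P₄)=T₄, CC(P₅)=T₅, CC(P₆)=2T₁+T₆, CC(P₇)=T₃+T₇, CC(P₈)=T₄+T₆+T₈, CC(P₉)=T₉ intertwines the coherent continuation action on the source (given by: s₁·P₀=P₀+P₄, s₂·P₀=P₀+P₃, s₁·P₁=−P₁, s₂·P₁=P₁+P₃, s₁·P₂=P₂+P₄, s₂·P₂=−P₂, s₁·P₃=P₁+P₃+P₆, s₂·P₃=−P₃, s₁·P₄=−P₄, s₂·P₄=P₂+P₄+P₅, s₁·P₅=P₄+P₅+P₈, s₂·P₅=−P₅, s₁·P₆=−P₆,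 s₂·P₆=P₃+P₆+P₇, s₁·P₇=P₆+P₇+P₉+P₁₀ with CC(P₁₀)=T₁+T₆+T₈+T₉, s₂·P₇=−P₇, s₁·P₈=−P₈, s₂·P₈=P₅+P₈+P₉+P₁₁ with CC(P₁₁)=T₂+T₇+T₉, s₁·P₉=−P₉, s₂·P₉=−P₉, s₁·P₁₀=−P₁₀, s₂·P₁₀=P₇+P₁₀, s₁·P₁₁=P₈+P₁₁, s₂·P₁₁=−P₁₁) with the action σ on the target: for every basis element Pᵢ (0 ≤ i ≤ 11) and j ∈ {1,2}, CC(s_j·Pᵢ) = σ_j(CC(Pᵢ)). -/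
/-- The coherent continuation action of `s₁` on the free ℤ-module on the irreducible
perverse sheaves `P₀, …, P₁₁` (columns are images of basis vectors):
`s₁·P₀=P₀+P₄, s₁·P₁=-P₁, s₁·P₂=P₂+P₄, s₁·P₃=P₁+P₃+P₆, s₁·P₄=-P₄, s₁·P₅=P₄+P₅+P₈,
s₁·P₆=-P₆, s₁·P₇=P₆+P₇+P₉+P₁₀, s₁·P₈=-P₈, s₁·P₉=-P₉, s₁·P₁₀=-P₁₀, s₁·P₁₁=P₈+P₁₁`. -/
def cohAct1 : Matrix (Fin 12) (Fin 12) ℤ :=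
  !![1, 0, 0, 0, 0, 0, 0, 0, 0, 0, 0, 0;
     0, -1, 0, 1, 0, 0, 0, 0, 0, 0, 0, 0;
     0, 0, 1, 0, 0, 0, 0, 0, 0, 0, 0, 0;
     0, 0, 0, 1, 0, 0, 0, 0, 0, 0, 0, 0;
     1, 0, 1, 0, -1, 1, 0, 0, 0, 0, 0, 0;
     0, 0, 0, 0, 0, 1, 0, 0, 0, 0, 0, 0;
     0, 0, 0, 1, 0, 0, -1, 1, 0, 0, 0, 0;
     0, 0, 0, 0, 0, 0, 0, 1, 0, 0, 0, 0;
     0, 0, 0, 0, 0, 1, 0, 0, -1, 0, 0, 1;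
     0, 0, 0, 0, 0, 0, 0, 1, 0, -1, 0, 0;
     0, 0, 0, 0, 0, 0, 0, 1, 0, 0, -1, 0;
     0, 0, 0, 0, 0, 0, 0, 0, 0, 0, 0, 1]

/-- The coherent continuation action of `s₂`:
`s₂·P₀=P₀+P₃, s₂·P₁=P₁+P₃, s₂·P₂=-P₂, s₂·P₃=-P₃, s₂·P₄=P₂+P₄+P₅, s₂·P₅=-P₅,
s₂·P₆=P₃+P₆+P₇, s₂·P₇=-P₇, s₂·P₈=P₅+P₈+P₉+P₁₁, s₂·P₉=-P₉, s₂·P₁₀=P₇+P₁₀,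
s₂·P₁₁=-P₁₁`. -/
def cohAct2 : Matrix (Fin 12) (Fin 12) ℤ :=
  !![1, 0, 0, 0, 0, 0, 0, 0, 0, 0, 0, 0;
     0, 1, 0, 0, 0, 0, 0, 0, 0, 0, 0, 0;
     0, 0, -1, 0, 1, 0, 0, 0, 0, 0, 0, 0;
     1, 1, 0, -1, 0, 0, 1, 0, 0, 0, 0, 0;
     0, 0, 0, 0, 1, 0, 0, 0, 0, 0, 0, 0;
     0, 0, 0, 0, 1, -1, 0, 0, 1, 0, 0, 0;
     0, 0, 0, 0, 0, 0, 1, 0, 0, 0, 0, 0;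
     0, 0, 0, 0, 0, 0, 1, -1, 0, 0, 1, 0;
     0, 0, 0, 0, 0, 0, 0, 0, 1, 0, 0, 0;
     0, 0, 0, 0, 0, 0, 0, 0, 1, -1, 0, 0;
     0, 0, 0, 0, 0, 0, 0, 0, 0, 0, 1, 0;
     0, 0, 0, 0, 0, 0, 0, 0, 1, 0, 0, -1]

/-- The characteristic cycle map, with columns `CC(P₀)=T₀, …, CC(P₅)=T₅,
`CC(P₆)=2T₁+T₆`, `CC(P₇)=T₃+T₇`, `CC(P₈)=T₄+T₆+T₈`, `CC(P₉)=T₉`,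
`CC(P₁₀)=T₁+T₆+T₈+T₉`, `CC(P₁₁)=T₂+T₇+T₉`. -/
def ccMap : Matrix (Fin 10) (Fin 12) ℤ :=
  !![1, 0, 0, 0, 0, 0, 0, 0, 0, 0, 0, 0;
     0, 1, 0, 0, 0, 0, 2, 0, 0, 0, 1, 0;
     0, 0, 1, 0, 0, 0, 0, 0, 0, 0, 0, 1;
     0, 0, 0, 1, 0, 0, 0, 1, 0, 0, 0, 0;
     0, 0, 0, 0, 1, 0, 0, 0, 1, 0, 0, 0;
     0, 0, 0, 0, 0, 1, 0, 0, 0, 0, 0, 0;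
     0, 0, 0, 0, 0, 0, 1, 0, 1, 0, 1, 0;
     0, 0, 0, 0, 0, 0, 0, 1, 0, 0, 0, 1;
     0, 0, 0, 0, 0, 0, 0, 0, 1, 0, 1, 0;
     0, 0, 0, 0, 0, 0, 0, 0, 0, 1, 1, 1]

/-- The characteristic cycle map intertwines the coherent continuation representation on
the source with the Hotta–Rossmann action on the target:
`CC(s_j · P_i) = σ_j(CC(P_i))` for all `0 ≤ i ≤ 11` and `j ∈ {1,2}`. -/
theorem characteristic_cycle_map_equivariant :
    ccMap * cohAct1 = sigma1 * ccMap ∧ ccMap * cohAct2 = sigma2 * ccMap := by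
  constructor <;> · ext i j; fin_cases i <;> fin_cases j <;> decide
end
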